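/- Let δ > 0, let s be a permutation of {1,…,g}, and let r, r′ be integers with 1 ≤ r′ ≤ g+1, r ∈ {r′−1, r′} and 0 ≤ r ≤ g, and set m = 𝕀_{s(1)} + ⋯ + 𝕀_{s(r)}. If Z ∈ D_m, then Θ̃(Z − δ r′ e_1) = Θ(Z) − (δ/2) r′(r′ − 1). -/

import Mathlib

/-!
Write `Z - δ r' e₁ = Z + W` with `W = -δ r' e₁`. Since `K̃ = K + δJ`, the summand of `Θ̃` at
`(n, Z + W)` is the summand of `Θ` at `(n, Z)` plus the summand of the theta function of `δJ` at
`(n, W)`, so it suffices that `m` minimizes both. It minimizes the first because `Z ∈ D_m`: the generic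
condition makes the weights `p_k` and `λ_{k+1} - λ_k` of the tridiagonal `K` positive, so the infimum
defining `Θ` is a genuine minimum.
For the second, with `n̂` the extension of `n` by zero, `n J nᵀ = n̂₀² + ∑ₖ (n̂ₖ - n̂ₖ₊₁)² ≥ n̂₀² + n̂₀`
because every integer satisfies `d ≤ d²`, hence `n J nᵀ - 2 r' n̂₀ ≥ (n̂₀ - r')(n̂₀ - r' + 1) - r'(r' - 1)
≥ -r'(r' - 1)`. For `m` the steps `m̂ₖ - m̂ₖ₊₁` count the `j < r` with `s j = k`, so they are `0` or
`1`, and `m̂₀ = r ∈ {r' - 1, r'}`: both inequalities are equalities.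
-/

open Matrix Finset

noncomputable section

namespace TropToda

variable (g : ℕ)

/-- The summand `(1/2) m K mᵀ + m Zᵀ` in the definition of the tropical theta function. -/
def thetaTerm (K : Matrix (Fin g) (Fin g) ℝ) (m : Fin g → ℤ) (Z : Fin g → ℝ) : ℝ :=
  (1/2) * (Matrix.vecMul (fun i => (m i : ℝ)) K ⬝ᵥ fun i => (m i : ℝ))
    + (fun i => (m i : ℝ)) ⬝ᵥ Z

/-- The tropical Riemann theta function associated with `K`. -/
def theta (K : Matrix (Fin g) (Fin g) ℝ) (Z : Fin g → ℝ) : ℝ :=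
  sInf (Set.range fun m : Fin g → ℤ => thetaTerm g K m Z)

/-- The fundamental region `D_m`. -/
def Dset (K : Matrix (Fin g) (Fin g) ℝ) (m : Fin g → ℤ) : Set (Fin g → ℝ) :=
  {Z | theta g K Z = thetaTerm g K m Z}

/-- The generic condition on `C = (C_{-1}, C_0, …, C_g)`. -/
def Generic (C : ℤ → ℝ) : Prop :=
  C (-1) > 2 * C 0 ∧
  (∀ i : ℤ, 0 ≤ i → i ≤ (g : ℤ) - 2 → C i + C (i + 2) > 2 * C (i + 1)) ∧
  C ((g : ℤ) - 1) > 2 * C (g : ℤ)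

/-- `L = C_{-1} − 2(g+1) C_g`. -/
def Lc (C : ℤ → ℝ) : ℝ := C (-1) - 2 * (g + 1) * C (g : ℤ)

/-- `λ_0 = C_g`, `λ_i = C_{g−i} − C_{g−i+1}` for `1 ≤ i ≤ g`. -/
def lam (C : ℤ → ℝ) (i : ℕ) : ℝ :=
  if i = 0 then C (g : ℤ) else C ((g : ℤ) - i) - C ((g : ℤ) - i + 1)

/-- `p_0 = L`, `p_i = L − 2 ∑_{j=1}^g min(λ_i − λ_0, λ_j − λ_0)`. -/
def pc (C : ℤ → ℝ) (i : ℕ) : ℝ :=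
  if i = 0 then Lc g C
  else Lc g C - 2 * ∑ j ∈ Finset.Icc 1 g,
    min (lam g C i - lam g C 0) (lam g C j - lam g C 0)

/-- The tridiagonal period matrix `K` (0-based index `a` corresponds to the paper's `a+1`). -/
def Kmat (C : ℤ → ℝ) : Matrix (Fin g) (Fin g) ℝ := fun a b =>
  if a = b then
    pc g C (a : ℕ) + pc g C ((a : ℕ) + 1) + 2 * (lam g C ((a : ℕ) + 1) - lam g C (a : ℕ))
  else if (a : ℕ) + 1 = (b : ℕ) then -(pc g C ((a : ℕ) + 1))
  else if (b : ℕ) + 1 = (a : ℕ) then -(pc g C ((b : ℕ) + 1))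
  else 0

/-- The first standard basis (row) vector `e_1`. -/
def e1 : Fin g → ℝ := fun i => if (i : ℕ) = 0 then 1 else 0

/-- `λ⃗ = (λ_1 − λ_0, …, λ_g − λ_{g−1})`. -/
def lamvec (C : ℤ → ℝ) : Fin g → ℝ := fun i => lam g C ((i : ℕ) + 1) - lam g C (i : ℕ)

/-- `Z_n^t = Z_0 − nL e_1 + t λ⃗`. -/
def Zpt (C : ℤ → ℝ) (Z0 : Fin g → ℝ) (n t : ℤ) : Fin g → ℝ :=
  fun i => Z0 i - (n : ℝ) * Lc g C * e1 g i + (t : ℝ) * lamvec g C i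

/-- `T_n^t = Θ(Z_n^t)`. -/
def Tf (C : ℤ → ℝ) (Z0 : Fin g → ℝ) (n t : ℤ) : ℝ :=
  theta g (Kmat g C) (Zpt g C Z0 n t)

/-- `Q_n^t = T_{n−1}^t + T_n^{t+1} − T_{n−1}^{t+1} − T_n^t + C_g`. -/
def Qf (C : ℤ → ℝ) (Z0 : Fin g → ℝ) (n t : ℤ) : ℝ :=
  Tf g C Z0 (n - 1) t + Tf g C Z0 n (t + 1) - Tf g C Z0 (n - 1) (t + 1)
    - Tf g C Z0 n t + C (g : ℤ)

/-- `W_n^t = L + T_{n−1}^{t+1} + T_{n+1}^t − T_n^t − T_n^{t+1} + C_g`. -/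
def Wf (C : ℤ → ℝ) (Z0 : Fin g → ℝ) (n t : ℤ) : ℝ :=
  Lc g C + Tf g C Z0 (n - 1) (t + 1) + Tf g C Z0 (n + 1) t - Tf g C Z0 n t
    - Tf g C Z0 n (t + 1) + C (g : ℤ)

/-- `σ_t ∘ ι_t : ℝ^g → ℝ^{2(g+1)}`, recording `(Q_n^t, W_n^t)_{n ∈ ℤ/(g+1)ℤ}`. -/
def sigmaIota (C : ℤ → ℝ) (t : ℤ) (Z0 : Fin g → ℝ) :
    (ZMod (g + 1) → ℝ) × (ZMod (g + 1) → ℝ) :=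
  (fun n => Qf g C Z0 (n.val : ℤ) t, fun n => Wf g C Z0 (n.val : ℤ) t)

/-- The tridiagonal matrix `J` with `2` on the diagonal and `−1` off it. -/
def Jmat : Matrix (Fin g) (Fin g) ℝ := fun a b =>
  if a = b then 2
  else if (a : ℕ) + 1 = (b : ℕ) then -1
  else if (b : ℕ) + 1 = (a : ℕ) then -1
  else 0

/-- `X_n = min_{k=0,…,g} ∑_{l=1}^k (W_{n−l} − Q_{n−l})`, indices mod `g+1`. -/
def todaX (Q W : ZMod (g + 1) → ℝ) (n : ZMod (g + 1)) : ℝ :=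
  ⨅ k : Fin (g + 1), ∑ l ∈ Finset.Icc 1 (k : ℕ),
    (W (n - (l : ZMod (g + 1))) - Q (n - (l : ZMod (g + 1))))

/-- The ultra-discrete periodic Toda evolution map. -/
def todaMap (QW : (ZMod (g + 1) → ℝ) × (ZMod (g + 1) → ℝ)) :
    (ZMod (g + 1) → ℝ) × (ZMod (g + 1) → ℝ) :=
  (fun n => min (QW.2 n) (QW.1 n - todaX g QW.1 QW.2 n),
   fun n => QW.1 (n + 1) + QW.2 n - min (QW.2 n) (QW.1 n - todaX g QW.1 QW.2 n))

/-- `Z̃_n^t = Z_{n_0}^0 − (n − n_0)(L + δ) e_1 + t λ⃗`. -/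
def Ztil (C : ℤ → ℝ) (Z0 : Fin g → ℝ) (n0 : ℤ) (δ : ℝ) (n t : ℤ) : Fin g → ℝ :=
  fun i => Zpt g C Z0 n0 0 i - ((n : ℝ) - (n0 : ℝ)) * (Lc g C + δ) * e1 g i
    + (t : ℝ) * lamvec g C i

/-- The theta function `Θ̃` associated with `K̃ = K + δJ`. -/
def thetaTil (C : ℤ → ℝ) (δ : ℝ) (Z : Fin g → ℝ) : ℝ :=
  theta g (Kmat g C + δ • Jmat g) Z

/-- `Q̃_n`. -/
def Qtil (C : ℤ → ℝ) (Z0 : Fin g → ℝ) (n0 : ℤ) (δ : ℝ) (n : ℤ) : ℝ :=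
  thetaTil g C δ (Ztil g C Z0 n0 δ (n - 1) 0) + thetaTil g C δ (Ztil g C Z0 n0 δ n 1)
    - thetaTil g C δ (Ztil g C Z0 n0 δ (n - 1) 1) - thetaTil g C δ (Ztil g C Z0 n0 δ n 0)

/-- `W̃_n`. -/
def Wtil (C : ℤ → ℝ) (Z0 : Fin g → ℝ) (n0 : ℤ) (δ : ℝ) (n : ℤ) : ℝ :=
  (Lc g C + δ) + thetaTil g C δ (Ztil g C Z0 n0 δ (n - 1) 1)
    + thetaTil g C δ (Ztil g C Z0 n0 δ (n + 1) 0)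
    - thetaTil g C δ (Ztil g C Z0 n0 δ n 0) - thetaTil g C δ (Ztil g C Z0 n0 δ n 1)

end TropToda

namespace TropToda

variable {g : ℕ}

section ZeroExt

variable {R : Type*}

def zeroExt [Zero R] (x : Fin g → R) (k : ℕ) : R := if h : k < g then x ⟨k, h⟩ else 0

@[simp]
lemma zeroExt_val [Zero R] (x : Fin g → R) (a : Fin g) : zeroExt x a = x a := by
  simp [zeroExt]

lemma zeroExt_of_le [Zero R] (x : Fin g → R) {k : ℕ} (hk : g ≤ k) : zeroExt x k = 0 :=
  dif_neg (by omega)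

@[simp, norm_cast]
lemma zeroExt_intCast [AddGroupWithOne R] (n : Fin g → ℤ) (k : ℕ) :
    zeroExt (fun i => (n i : R)) k = zeroExt n k := by
  unfold zeroExt; split_ifs <;> simp

lemma sum_ite_val_eq_zeroExt [AddCommMonoid R] (x : Fin g → R) (k : ℕ) :
    ∑ b : Fin g, (if (b : ℕ) = k then x b else 0) = zeroExt x k := by
  unfold zeroExt
  split_ifs with h
  · simp [← Fin.ext_iff (b := ⟨k, h⟩)]
  · exact sum_eq_zero fun b _ => if_neg (by omega)

lemma dotProduct_eq_sum_range_zeroExt [NonUnitalNonAssocSemiring R] (x z : Fin g → R) :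
    x ⬝ᵥ z = ∑ k ∈ range g, zeroExt x k * zeroExt z k := by
  rw [← Fin.sum_univ_eq_sum_range (fun k => zeroExt x k * zeroExt z k)]
  simp [dotProduct]

end ZeroExt

section Tridiag

variable {R : Type*} [CommRing R]

def tridiag (p c : ℕ → R) : Matrix (Fin g) (Fin g) R := fun a b =>
  if a = b then p a + p (a + 1) + c a
  else if (a : ℕ) + 1 = b then -p (a + 1)
  else if (b : ℕ) + 1 = a then -p (b + 1)
  else 0

lemma sum_range_tridiag_eq (p c y : ℕ → R) (n : ℕ) (hy : y n = 0) :
    ∑ k ∈ range n, ((p k + p (k + 1) + c k) * y k ^ 2 - 2 * (p (k + 1) * y k * y (k + 1)))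
      = p 0 * y 0 ^ 2 + ∑ k ∈ range n, (p (k + 1) * (y k - y (k + 1)) ^ 2 + c k * y k ^ 2) := by
  have htel := sum_range_sub (fun k => p k * y k ^ 2) n
  have hdiff : ∑ k ∈ range n, ((p k + p (k + 1) + c k) * y k ^ 2 - 2 * (p (k + 1) * y k * y (k + 1)))
      - ∑ k ∈ range n, (p (k + 1) * (y k - y (k + 1)) ^ 2 + c k * y k ^ 2)
      = -∑ k ∈ range n, (p (k + 1) * y (k + 1) ^ 2 - p k * y k ^ 2) := by
    rw [← sum_sub_distrib, ← sum_neg_distrib]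
    exact sum_congr rfl fun k _ => by ring
  simp only [hy] at htel
  linear_combination hdiff - htel

lemma vecMul_tridiag_dotProduct (p c : ℕ → R) (x : Fin g → R) :
    vecMul x (tridiag p c) ⬝ᵥ x = p 0 * zeroExt x 0 ^ 2
      + ∑ k ∈ range g, (p (k + 1) * (zeroExt x k - zeroExt x (k + 1)) ^ 2
        + c k * zeroExt x k ^ 2) := by
  have hentry : ∀ a b : Fin g, x a * tridiag p c a b * x b =
      (if a = b then (p a + p (a + 1) + c a) * x a ^ 2 else 0)
        - p (a + 1) * x a * (if (b : ℕ) = a + 1 then x b else 0)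
        - p (b + 1) * x b * (if (a : ℕ) = b + 1 then x a else 0) := by
    intro a b
    unfold tridiag
    by_cases hab : a = b
    · subst hab; simp; ring
    · have : (a : ℕ) ≠ b := fun h => hab (Fin.ext h)
      split_ifs <;> first | omega | ring
  have hsum : vecMul x (tridiag p c) ⬝ᵥ x
      = ∑ a : Fin g, ∑ b : Fin g, x a * tridiag p c a b * x b := by
    simp only [vecMul, dotProduct, sum_mul]
    exact sum_comm
  rw [hsum]
  simp only [hentry, sum_sub_distrib, ← mul_sum, sum_ite_eq, mem_univ, if_true,
    sum_ite_val_eq_zeroExt]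
  rw [sum_comm (f := fun (a b : Fin g) => p (b + 1) * x b * if (a : ℕ) = b + 1 then x a else 0)]
  simp only [← mul_sum, sum_ite_val_eq_zeroExt]
  rw [← sum_range_tridiag_eq p c (zeroExt x) g (zeroExt_of_le x le_rfl),
    ← sum_sub_distrib, ← sum_sub_distrib, ← Fin.sum_univ_eq_sum_range (fun k =>
      (p k + p (k + 1) + c k) * zeroExt x k ^ 2 - 2 * (p (k + 1) * zeroExt x k * zeroExt x (k + 1)))]
  simp only [zeroExt_val]
  exact sum_congr rfl fun a _ => by ring

lemma sum_mul_sq_le_vecMul_tridiag_dotProduct [LinearOrder R] [IsStrictOrderedRing R]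
    (p c : ℕ → R) (hp : ∀ k ≤ g, 0 ≤ p k) (x : Fin g → R) :
    ∑ k ∈ range g, c k * zeroExt x k ^ 2 ≤ vecMul x (tridiag p c) ⬝ᵥ x := by
  rw [vecMul_tridiag_dotProduct, sum_add_distrib]
  have h0 : 0 ≤ p 0 * zeroExt x 0 ^ 2 := mul_nonneg (hp 0 (Nat.zero_le g)) (sq_nonneg _)
  have h1 : 0 ≤ ∑ k ∈ range g, p (k + 1) * (zeroExt x k - zeroExt x (k + 1)) ^ 2 :=
    sum_nonneg fun k hk => mul_nonneg (hp _ (mem_range.1 hk)) (sq_nonneg _)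
  linarith

end Tridiag

lemma Kmat_eq_tridiag (C : ℤ → ℝ) :
    Kmat g C = tridiag (pc g C) (fun k => 2 * (lam g C (k + 1) - lam g C k)) := rfl

lemma Jmat_eq_tridiag : Jmat g = tridiag 1 0 := by
  ext a b
  simp only [Jmat, tridiag, Pi.one_apply, Pi.zero_apply]
  norm_num

section Theta

lemma thetaTerm_add (K K' : Matrix (Fin g) (Fin g) ℝ) (n : Fin g → ℤ) (Z Z' : Fin g → ℝ) :
    thetaTerm g (K + K') n (Z + Z') = thetaTerm g K n Z + thetaTerm g K' n Z' := by
  simp only [thetaTerm, vecMul_add, add_dotProduct, dotProduct_add]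
  ring

lemma bddBelow_range_thetaTerm_tridiag (p c : ℕ → ℝ) (hp : ∀ k ≤ g, 0 ≤ p k)
    (hc : ∀ k < g, 0 < c k) (Z : Fin g → ℝ) :
    BddBelow (Set.range fun n => thetaTerm g (tridiag p c) n Z) := by
  refine ⟨∑ k ∈ range g, -zeroExt Z k ^ 2 / (2 * c k), ?_⟩
  rintro _ ⟨n, rfl⟩
  set x : Fin g → ℝ := fun i => (n i : ℝ)
  have hform := sum_mul_sq_le_vecMul_tridiag_dotProduct p c hp x
  -- `c t² / 2 + t z ≥ -z² / (2c)` is `(c t + z)² ≥ 0`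
  have hsq : ∑ k ∈ range g, -zeroExt Z k ^ 2 / (2 * c k)
      ≤ ∑ k ∈ range g, (c k * zeroExt x k ^ 2 / 2 + zeroExt x k * zeroExt Z k) := by
    refine sum_le_sum fun k hk => ?_
    have hck := hc k (mem_range.1 hk)
    rw [div_le_iff₀ (by positivity)]
    nlinarith [sq_nonneg (c k * zeroExt x k + zeroExt Z k)]
  rw [sum_add_distrib, ← sum_div, ← dotProduct_eq_sum_range_zeroExt] at hsq
  unfold thetaTerm
  linarith

variable {K K' : Matrix (Fin g) (Fin g) ℝ} {m : Fin g → ℤ} {Z Z' : Fin g → ℝ}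

lemma thetaTerm_le_of_mem_Dset (hb : BddBelow (Set.range fun n => thetaTerm g K n Z))
    (hZ : Z ∈ Dset g K m) (n : Fin g → ℤ) : thetaTerm g K m Z ≤ thetaTerm g K n Z :=
  hZ ▸ csInf_le hb ⟨n, rfl⟩

lemma mem_Dset_of_forall_le (h : ∀ n, thetaTerm g K m Z ≤ thetaTerm g K n Z) :
    Z ∈ Dset g K m :=
  IsLeast.csInf_eq ⟨⟨m, rfl⟩, Set.forall_mem_range.2 h⟩

lemma theta_add_of_forall_le (hb : BddBelow (Set.range fun n => thetaTerm g K n Z))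
    (hZ : Z ∈ Dset g K m) (h' : ∀ n, thetaTerm g K' m Z' ≤ thetaTerm g K' n Z') :
    theta g (K + K') (Z + Z') = theta g K Z + thetaTerm g K' m Z' := by
  have hsum : Z + Z' ∈ Dset g (K + K') m := mem_Dset_of_forall_le fun n => by
    simp only [thetaTerm_add]
    exact add_le_add (thetaTerm_le_of_mem_Dset hb hZ n) (h' n)
  rw [hsum, thetaTerm_add, hZ]

end Theta

section Generic

variable {C : ℤ → ℝ}

lemma lam_succ (C : ℤ → ℝ) (k : ℕ) :
    lam g C (k + 1) = C ((g : ℤ) - k - 1) - C ((g : ℤ) - k) := by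
  simp only [lam, Nat.add_one_ne_zero, if_false]
  congr 2 <;> push_cast <;> ring

lemma sum_Icc_lam (C : ℤ → ℝ) : ∑ j ∈ Icc 1 g, lam g C j = C 0 - C g := by
  rw [← Finset.Ico_add_one_right_eq_Icc, sum_Ico_eq_sum_range, Nat.add_sub_cancel]
  simp_rw [add_comm 1, lam_succ]
  have := sum_range_sub (fun k : ℕ => C ((g : ℤ) - k)) g
  simpa only [Nat.cast_zero, sub_zero, sub_self, Nat.cast_add, Nat.cast_one, ← sub_sub] using this

lemma Generic.lam_succ_sub_lam_pos (hC : Generic g C) {k : ℕ} (hk : k < g) :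
    0 < lam g C (k + 1) - lam g C k := by
  rcases k with _ | k
  · have := hC.2.2
    rw [lam_succ]
    simp only [lam, if_true, Nat.cast_zero, sub_zero]
    linarith
  · have := hC.2.1 ((g : ℤ) - k - 2) (by omega) (by omega)
    rw [show (g : ℤ) - k - 2 + 2 = g - k by ring, show (g : ℤ) - k - 2 + 1 = g - k - 1 by ring]
      at this
    rw [lam_succ, lam_succ]
    push_cast
    rw [show (g : ℤ) - (k + 1) - 1 = g - k - 2 by ring, show (g : ℤ) - (k + 1) = g - k - 1 by ring]
    linarith

lemma Generic.lam_zero_le (hC : Generic g C) {j : ℕ} (hj : j ≤ g) : lam g C 0 ≤ lam g C j := by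
  induction j with
  | zero => rfl
  | succ j ih => linarith [ih (by omega), hC.lam_succ_sub_lam_pos (show j < g by omega)]

/-- Every `p_k` is at least `C_{-1} - 2 C_0`. -/
lemma Generic.pc_pos (hC : Generic g C) (k : ℕ) : 0 < pc g C k := by
  have hsum : ∑ j ∈ Icc 1 g, (lam g C j - lam g C 0) = C 0 - C g - g * C g := by
    rw [sum_sub_distrib, sum_Icc_lam, sum_const, Nat.card_Icc]
    simp [lam]
  have hnonneg : 0 ≤ ∑ j ∈ Icc 1 g, (lam g C j - lam g C 0) :=
    sum_nonneg fun j hj => sub_nonneg.2 (hC.lam_zero_le (mem_Icc.1 hj).2)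
  have hmin : ∑ j ∈ Icc 1 g, min (lam g C k - lam g C 0) (lam g C j - lam g C 0)
      ≤ ∑ j ∈ Icc 1 g, (lam g C j - lam g C 0) := sum_le_sum fun j _ => min_le_right _ _
  have h1 := hC.1
  unfold pc Lc at *
  split_ifs <;> nlinarith

lemma Generic.bddBelow_range_thetaTerm (hC : Generic g C) (Z : Fin g → ℝ) :
    BddBelow (Set.range fun n => thetaTerm g (Kmat g C) n Z) := by
  rw [Kmat_eq_tridiag]
  exact bddBelow_range_thetaTerm_tridiag _ _ (fun k _ => (hC.pc_pos k).le)
    (fun _ hk => mul_pos two_pos (hC.lam_succ_sub_lam_pos hk)) Z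

end Generic

section Jmat

lemma sub_le_sum_sq_sub (y : ℕ → ℤ) (N : ℕ) :
    y 0 - y N ≤ ∑ k ∈ range N, (y k - y (k + 1)) ^ 2 :=
  (sum_range_sub' y N).symm.le.trans (sum_le_sum fun _ _ => Int.le_self_sq _)

lemma sum_sq_sub_eq (y : ℕ → ℤ) (N : ℕ)
    (h : ∀ k < N, 0 ≤ y k - y (k + 1) ∧ y k - y (k + 1) ≤ 1) :
    ∑ k ∈ range N, (y k - y (k + 1)) ^ 2 = y 0 - y N := by
  rw [← sum_range_sub' y N]
  refine sum_congr rfl fun k hk => ?_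
  obtain h0 | h1 : y k - y (k + 1) = 0 ∨ y k - y (k + 1) = 1 := by
    have := h k (mem_range.1 hk); omega
  · rw [h0]; norm_num
  · rw [h1]; norm_num

lemma vecMul_Jmat_dotProduct (n : Fin g → ℤ) :
    vecMul (fun i => (n i : ℝ)) (Jmat g) ⬝ᵥ (fun i => (n i : ℝ))
      = ((zeroExt n 0 ^ 2 + ∑ k ∈ range g, (zeroExt n k - zeroExt n (k + 1)) ^ 2 : ℤ) : ℝ) := by
  rw [Jmat_eq_tridiag, vecMul_tridiag_dotProduct]
  simp

lemma dotProduct_e1 (n : Fin g → ℤ) : (fun i => (n i : ℝ)) ⬝ᵥ e1 g = zeroExt n 0 := by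
  simp only [dotProduct, e1, mul_ite, mul_one, mul_zero, sum_ite_val_eq_zeroExt, zeroExt_intCast]

lemma thetaTerm_smul_Jmat_smul_e1 (δ a : ℝ) (n : Fin g → ℤ) :
    thetaTerm g (δ • Jmat g) n (a • e1 g) = δ / 2
      * ((zeroExt n 0 ^ 2 + ∑ k ∈ range g, (zeroExt n k - zeroExt n (k + 1)) ^ 2 : ℤ) : ℝ)
        + a * zeroExt n 0 := by
  rw [thetaTerm, vecMul_smul, smul_dotProduct, vecMul_Jmat_dotProduct, dotProduct_smul,
    dotProduct_e1, smul_eq_mul, smul_eq_mul]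
  ring

lemma neg_le_thetaTerm_smul_Jmat {δ : ℝ} (hδ : 0 ≤ δ) (a : ℤ) (n : Fin g → ℤ) :
    -(δ / 2 * a * (a - 1)) ≤ thetaTerm g (δ • Jmat g) n (-(δ * a) • e1 g) := by
  rw [thetaTerm_smul_Jmat_smul_e1]
  set b := zeroExt n 0
  have hsum := sub_le_sum_sq_sub (zeroExt n) g
  rw [zeroExt_of_le n le_rfl, sub_zero] at hsum
  have hprod : 0 ≤ (b - a) * (b - a + 1) := by
    rcases le_or_gt 0 (b - a) with h | h
    · positivity
    · exact mul_nonneg_of_nonpos_of_nonpos h.le (by omega)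
  have key : (0 : ℝ) ≤ (b ^ 2 + ∑ k ∈ range g, (zeroExt n k - zeroExt n (k + 1)) ^ 2 : ℤ)
      - 2 * a * b + a * (a - 1) := by
    exact_mod_cast (by nlinarith : (0 : ℤ) ≤ _)
  nlinarith [mul_nonneg hδ key]

lemma thetaTerm_smul_Jmat_eq (δ : ℝ) (a : ℤ) (n : Fin g → ℤ)
    (h0 : zeroExt n 0 = a ∨ zeroExt n 0 = a - 1)
    (hstep : ∀ k < g, 0 ≤ zeroExt n k - zeroExt n (k + 1) ∧ zeroExt n k - zeroExt n (k + 1) ≤ 1) :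
    thetaTerm g (δ • Jmat g) n (-(δ * a) • e1 g) = -(δ / 2 * a * (a - 1)) := by
  rw [thetaTerm_smul_Jmat_smul_e1, sum_sq_sub_eq _ _ hstep, zeroExt_of_le n le_rfl]
  rcases h0 with h | h <;> rw [h] <;> push_cast <;> ring

end Jmat

section StairSum

variable (s : Equiv.Perm (Fin g)) (r : ℤ)

/-- `m = 𝕀_{s(1)} + ⋯ + 𝕀_{s(r)}` in 0-based coordinates. -/
def stairSum : Fin g → ℤ := fun i => #{j : Fin g | ((j : ℕ) : ℤ) < r ∧ (i : ℕ) ≤ (s j : ℕ)}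

lemma zeroExt_stairSum (k : ℕ) :
    zeroExt (stairSum s r) k = #{j : Fin g | ((j : ℕ) : ℤ) < r ∧ k ≤ (s j : ℕ)} := by
  unfold zeroExt
  split_ifs with hk
  · rfl
  · have : ∀ j : Fin g, ¬(((j : ℕ) : ℤ) < r ∧ k ≤ (s j : ℕ)) := fun j h => by
      have := (s j).isLt; omega
    simp [filter_false_of_mem fun j _ => this j]

lemma zeroExt_stairSum_zero (hr0 : 0 ≤ r) (hrg : r ≤ g) : zeroExt (stairSum s r) 0 = r := by
  rw [zeroExt_stairSum]
  have : #{j : Fin g | ((j : ℕ) : ℤ) < r ∧ 0 ≤ (s j : ℕ)} = #{j : Fin g | (j : ℕ) < r.toNat} := by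
    congr 1; exact filter_congr fun j _ => by omega
  rw [this, Fin.card_filter_val_lt]
  omega

lemma zeroExt_stairSum_sub_succ (k : ℕ) :
    zeroExt (stairSum s r) k - zeroExt (stairSum s r) (k + 1)
      = #{j : Fin g | ((j : ℕ) : ℤ) < r ∧ (s j : ℕ) = k} := by
  simp only [zeroExt_stairSum, card_filter, Nat.cast_sum, ← sum_sub_distrib]
  refine sum_congr rfl fun j _ => ?_
  split_ifs <;> omega

lemma zeroExt_stairSum_sub_succ_mem_Icc (k : ℕ) :
    0 ≤ zeroExt (stairSum s r) k - zeroExt (stairSum s r) (k + 1)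
      ∧ zeroExt (stairSum s r) k - zeroExt (stairSum s r) (k + 1) ≤ 1 := by
  rw [zeroExt_stairSum_sub_succ]
  refine ⟨by positivity, Nat.cast_le_one.2 <| card_le_one.2 fun a ha b hb => ?_⟩
  simp only [mem_filter, mem_univ, true_and] at ha hb
  exact s.injective (Fin.ext (by omega))

end StairSum

end TropToda

open TropToda in
theorem thetaTil_shift_general
    (g : ℕ) (C : ℤ → ℝ) (hC : Generic g C)
    (δ : ℝ) (hδ : 0 < δ) (s : Equiv.Perm (Fin g)) (r r' : ℤ)
    (hr : r = r' - 1 ∨ r = r')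
    (hr0 : 0 ≤ r) (hrg : r ≤ (g : ℤ))
    (m : Fin g → ℤ)
    (hm : m = fun i : Fin g =>
      ((Finset.univ.filter fun j : Fin g => ((j : ℕ) : ℤ) < r ∧ (i : ℕ) ≤ ((s j : Fin g) : ℕ)).card : ℤ))
    (Z : Fin g → ℝ) (hZ : Z ∈ Dset g (Kmat g C) m) :
    theta g (Kmat g C + δ • Jmat g) (fun i => Z i - δ * (r' : ℝ) * e1 g i)
      = theta g (Kmat g C) Z - (δ / 2) * (r' : ℝ) * ((r' : ℝ) - 1) := by
  change m = stairSum s r at hm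
  subst hm
  have hJ := thetaTerm_smul_Jmat_eq δ r' (stairSum s r)
    (by rw [zeroExt_stairSum_zero s r hr0 hrg]; omega)
    (fun k _ => zeroExt_stairSum_sub_succ_mem_Icc s r k)
  have hshift : (fun i => Z i - δ * (r' : ℝ) * e1 g i) = Z + -(δ * r') • e1 g := by
    ext i; simp [sub_eq_add_neg]
  rw [hshift, theta_add_of_forall_le (hC.bddBelow_range_thetaTerm Z) hZ
    (fun n => hJ ▸ neg_le_thetaTerm_smul_Jmat hδ.le r' n), hJ]
  ring

open TropToda in
/-- if `Z ∈ D_m` with `m = 𝕀_{s(1)} + ⋯ + 𝕀_{s(r)}`, then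
`Θ̃(Z − δ r′ e_1) = Θ(Z) − (δ/2) r′(r′−1)`. -/
theorem thetaTil_shift
    (g : ℕ) (hg : 0 < g) (C : ℤ → ℝ) (hC : Generic g C)
    (δ : ℝ) (hδ : 0 < δ) (s : Equiv.Perm (Fin g)) (r r' : ℤ)
    (hr'1 : 1 ≤ r') (hr'2 : r' ≤ (g : ℤ) + 1) (hr : r = r' - 1 ∨ r = r')
    (hr0 : 0 ≤ r) (hrg : r ≤ (g : ℤ))
    (m : Fin g → ℤ)
    (hm : m = fun i : Fin g =>
      ((Finset.univ.filter fun j : Fin g => ((j : ℕ) : ℤ) < r ∧ (i : ℕ) ≤ ((s j : Fin g) : ℕ)).card : ℤ))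
    (Z : Fin g → ℝ) (hZ : Z ∈ Dset g (Kmat g C) m) :
    theta g (Kmat g C + δ • Jmat g) (fun i => Z i - δ * (r' : ℝ) * e1 g i)
      = theta g (Kmat g C) Z - (δ / 2) * (r' : ℝ) * ((r' : ℝ) - 1) :=
  thetaTil_shift_general g C hC δ hδ s r r' hr hr0 hrg m hm Z hZ
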